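/- arXiv:1806.09286 — 2 statements merged into one kernel-verified Lean document; each statement's English description precedes it below -/
import Mathlib

section
/- Let κ be a regular cardinal. If 𝔯_κ < 𝔡_κ then 𝔯_κ = 𝔲_κ. -/
open Cardinal

/-- `f ≤* g` in `κ^κ`: the set of counterexamples to domination has size `< κ`.
Here `κ` is represented by its canonical well-ordered type `κ.ord.ToType`. -/
def AlmostLE (κ : Cardinal) (f g : κ.ord.ToType → κ.ord.ToType) : Prop :=
  #↥{β : κ.ord.ToType | g β < f β} < κ

/-- The dominating number `𝔡_κ`: the minimal size of a family `D ⊆ κ^κ` such that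
every `f ∈ κ^κ` is `≤*`-dominated by a member of `D`. -/
noncomputable def dNumber (κ : Cardinal) : Cardinal :=
  sInf {c : Cardinal | ∃ D : Set (κ.ord.ToType → κ.ord.ToType),
    (∀ f : κ.ord.ToType → κ.ord.ToType, ∃ g ∈ D, AlmostLE κ f g) ∧ #↥D = c}

/-- `S` splits `B` iff `|S ∩ B| = |Sᶜ ∩ B| = κ`. -/
def Splits (κ : Cardinal) (S B : Set κ.ord.ToType) : Prop :=
  #↥(S ∩ B) = κ ∧ #↥(Sᶜ ∩ B) = κ

/-- A family `A ⊆ [κ]^κ` is unreaped iff no single `S ∈ [κ]^κ` splits all its members. -/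
def Unreaped (κ : Cardinal) (A : Set (Set κ.ord.ToType)) : Prop :=
  ¬ ∃ S : Set κ.ord.ToType, #↥S = κ ∧ ∀ y ∈ A, Splits κ S y

/-- The reaping number `𝔯_κ`: the minimal cardinality of an unreaped family in `[κ]^κ`. -/
noncomputable def rNumber (κ : Cardinal) : Cardinal :=
  sInf {c : Cardinal | ∃ A : Set (Set κ.ord.ToType),
    (∀ y ∈ A, #↥y = κ) ∧ Unreaped κ A ∧ #↥A = c}

/-- The ultrafilter number `𝔲_κ`: the minimal size of a base for some uniform
ultrafilter over `κ`. -/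
noncomputable def uNumber (κ : Cardinal) : Cardinal :=
  sInf {c : Cardinal | ∃ U : Ultrafilter κ.ord.ToType, (∀ A ∈ U, #↥A = κ) ∧
    ∃ B : Set (Set κ.ord.ToType), (∀ b ∈ B, b ∈ U) ∧ (∀ A ∈ U, ∃ b ∈ B, b ⊆ A) ∧ #↥B = c}

/-!
Every base of a uniform ultrafilter is unreaped, so `𝔯_κ ≤ 𝔲_κ`. Conversely, let `𝒜` be an unreaped
family of size `𝔯_κ`; it has at least `κ` members, because fewer than `κ` sets of size `κ` are all
split by a union of blocks of a suitable interval partition. For finite `H ⊆ 𝒜` choose `g_H` such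
that every `B ∈ H` meets every interval `(β, g_H β)`. As `𝔯_κ < 𝔡_κ`, some `f` is not dominated by
any `g_H ∘ g_H`. Choose an unbounded `E ⊆ κ` such that `f` maps `[0, e]` below the successor `e⁺` of
`e` in `E`, and let `φ β` be the least point of `E` above `β`. Then `⋂_{B ∈ H} φ[B]` is unbounded:
otherwise `g_H β ≥ φ β` for all large `β`, whence `g_H (g_H β) ≥ φ (φ β) > f β`. The sets `φ[B]`,
`B ∈ 𝒜`, and the tails of `κ` generate a uniform filter with a base of size `𝔯_κ`, and it is an
ultrafilter: for every `S` some `B ∈ 𝒜` is not split by `φ⁻¹[S]`, so that `S` or its complement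
contains a tail of `φ[B]`.
-/

open Set Filter Order

universe u

section Cofinal

variable {α : Type*} {s : Set α}

theorem IsCofinal.exists_gt [Preorder α] [NoMaxOrder α] (hs : IsCofinal s) (a : α) :
    ∃ x ∈ s, a < x := by
  obtain ⟨b, hab⟩ := NoMaxOrder.exists_gt a
  obtain ⟨x, hx, hbx⟩ := hs b
  exact ⟨x, hx, hab.trans_le hbx⟩

theorem IsCofinal.inter_Ioi [LinearOrder α] [NoMaxOrder α] (hs : IsCofinal s) (a : α) :
    IsCofinal (s ∩ Ioi a) := fun b => by
  obtain ⟨x, hx, hbx⟩ := hs.exists_gt (max a b)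
  exact ⟨x, ⟨hx, (le_max_left a b).trans_lt hbx⟩, (le_max_right a b).trans hbx.le⟩

end Cofinal

def IsSparseFor {α : Type*} [Preorder α] (f : α → α) (E : Set α) : Prop :=
  ∀ ⦃e⦄, e ∈ E → ∀ ⦃e'⦄, e' ∈ E → e < e' → ∀ x ≤ e, f x < e'

/-- `atTop ⊓ ⨅ i, 𝓟 (φ '' B i)`, written as a directed infimum of principal filters. -/
def imageTailFilter {α ι : Type*} [Preorder α] (φ : α → α) (B : ι → Set α) : Filter α :=
  ⨅ i : Finset ι × α, 𝓟 ((⋂ j ∈ (i.1 : Set ι), φ '' B j) ∩ Ioi i.2)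

section Next

variable {α : Type*} [LinearOrder α] [WellFoundedLT α] [NoMaxOrder α] {E : Set α}
  (hE : IsCofinal E)

noncomputable def IsCofinal.next (β : α) : α :=
  wellFounded_lt.min {e | e ∈ E ∧ β < e} (hE.exists_gt β)

theorem IsCofinal.next_mem (β : α) : hE.next β ∈ E :=
  (wellFounded_lt.min_mem {e | e ∈ E ∧ β < e} (hE.exists_gt β)).1

theorem IsCofinal.lt_next (β : α) : β < hE.next β :=
  (wellFounded_lt.min_mem {e | e ∈ E ∧ β < e} (hE.exists_gt β)).2

theorem IsCofinal.next_le {β e : α} (he : e ∈ E) (hβe : β < e) : hE.next β ≤ e :=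
  wellFounded_lt.min_le (s := {e | e ∈ E ∧ β < e}) ⟨he, hβe⟩

theorem IsCofinal.next_mono : Monotone hE.next := fun _ b hab =>
  hE.next_le (hE.next_mem b) (hab.trans_lt (hE.lt_next b))

theorem IsCofinal.next_eq_of_le_of_lt {β p : α} (hβp : β ≤ p) (hp : p < hE.next β) :
    hE.next p = hE.next β :=
  (hE.next_le (hE.next_mem β) hp).antisymm (hE.next_mono hβp)

theorem IsCofinal.le_of_next_lt {β p : α} (h : hE.next β < hE.next p) : hE.next β ≤ p := by
  by_contra! hp
  exact (hE.next_le (hE.next_mem β) hp).not_gt h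

theorem IsSparseFor.lt_next_next {f : α → α} (hS : IsSparseFor f E) (β : α) :
    f β < hE.next (hE.next β) :=
  hS (hE.next_mem β) (hE.next_mem _) (hE.lt_next _) β (hE.lt_next β).le

theorem IsSparseFor.isCofinal_biInter_image_next {f g : α → α} (hS : IsSparseFor f E)
    {ι : Type*} {B : ι → Set α} {s : Set ι} (hg : ∀ β, ∀ i ∈ s, (B i ∩ Ioo β (g β)).Nonempty)
    (hfg : IsCofinal {β | g (g β) < f β}) : IsCofinal (⋂ i ∈ s, hE.next '' B i) := by
  intro γ
  by_contra! hγ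
  -- Beyond `γ` some `B i` misses the block of `β`, and then `g β` lies beyond that block.
  have next_le_g : ∀ β, γ ≤ β → hE.next β ≤ g β := by
    intro β hγβ
    obtain ⟨i, hi, hβi⟩ : ∃ i ∈ s, hE.next β ∉ hE.next '' B i := by
      by_contra! h
      exact (hγ _ (mem_iInter₂.2 h)).not_ge (hγβ.trans (hE.lt_next β).le)
    obtain ⟨p, hpB, hβp, hpg⟩ := hg β i hi
    have hlt : hE.next β < hE.next p :=
      (hE.next_mono hβp.le).lt_of_ne fun h => hβi ⟨p, hpB, h.symm⟩
    exact (hE.le_of_next_lt hlt).trans hpg.le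
  obtain ⟨β, hgf, hγβ⟩ := hfg γ
  have hβg : γ ≤ g β := hγβ.trans ((hE.lt_next β).le.trans (next_le_g β hγβ))
  have : f β < g (g β) := calc
    f β < hE.next (hE.next β) := hS.lt_next_next hE β
    _ ≤ hE.next (g β) := hE.next_mono (next_le_g β hγβ)
    _ ≤ g (g β) := next_le_g _ hβg
  exact this.not_gt hgf

end Next

section ImageTailFilter

variable {α ι : Type*} [LinearOrder α] (φ : α → α) (B : ι → Set α)

theorem hasBasis_imageTailFilter [Nonempty α] :
    (imageTailFilter φ B).HasBasis (fun _ => True)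
      fun i : Finset ι × α => (⋂ j ∈ (i.1 : Set ι), φ '' B j) ∩ Ioi i.2 := by
  classical
  refine hasBasis_iInf_principal fun i i' => ⟨(i.1 ∪ i'.1, max i.2 i'.2), ?_, ?_⟩ <;>
    exact inter_subset_inter (biInter_subset_biInter_left (by simp)) (Ioi_subset_Ioi (by simp))

theorem isCofinal_of_mem_imageTailFilter [Nonempty α] [NoMaxOrder α]
    (h : ∀ t : Finset ι, IsCofinal (⋂ j ∈ (t : Set ι), φ '' B j)) {X : Set α}
    (hX : X ∈ imageTailFilter φ B) : IsCofinal X := by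
  obtain ⟨i, -, hi⟩ := (hasBasis_imageTailFilter φ B).mem_iff.1 hX
  exact ((h i.1).inter_Ioi i.2).mono hi

variable {φ B}

theorem compl_mem_imageTailFilter (hφ : Monotone φ) {T : Set α} {i : ι} {δ : α}
    (h : ∀ p ∈ φ ⁻¹' T ∩ B i, p < δ) : Tᶜ ∈ imageTailFilter φ B := by
  refine mem_iInf_of_mem ({i}, φ δ) (mem_principal.2 ?_)
  rintro _ ⟨hx, hδx⟩ hxT
  obtain ⟨p, hp, rfl⟩ := mem_iInter₂.1 hx i (by simp)
  exact (hφ.reflect_lt hδx).not_gt (h p ⟨hxT, hp⟩)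

end ImageTailFilter

theorem exists_subset_mk_eq_mk_diff_eq {β : Type*} {R : Set β} (hR : ℵ₀ ≤ #R) :
    ∃ T ⊆ R, #T = #R ∧ #↥(R \ T) = #R := by
  obtain ⟨e⟩ : Nonempty (R ⊕ R ≃ R) := Cardinal.eq.1 (by rw [mk_sum, lift_id, add_eq_self hR])
  have he : Function.Injective fun x => (e x : β) := Subtype.val_injective.comp e.injective
  refine ⟨range fun x => (e (.inl x) : β), range_subset_iff.2 fun x => (e _).2,
    mk_range_eq _ (he.comp Sum.inl_injective), (mk_le_mk_of_subset sdiff_subset).antisymm ?_⟩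
  calc #R = #(range fun x => (e (.inr x) : β)) := (mk_range_eq _ (he.comp Sum.inr_injective)).symm
    _ ≤ #↥(R \ range fun x => (e (.inl x) : β)) := by
      refine mk_le_mk_of_subset (range_subset_iff.2 fun x => ⟨(e _).2, ?_⟩)
      rintro ⟨y, hy⟩
      exact Sum.inl_ne_inr (he hy)

theorem mk_le_mk_preimage_inter {β γ : Type u} {φ : β → γ} {s : Set β} {t u : Set γ}
    (htu : t ⊆ u) (hts : t ⊆ φ '' s) : #t ≤ #↥(φ ⁻¹' u ∩ s) := by
  refine (mk_le_mk_of_subset fun x hx => ?_).trans (mk_image_le (f := φ))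
  obtain ⟨p, hp, rfl⟩ := hts hx
  exact ⟨p, ⟨htu hx, hp⟩, rfl⟩

section RegularCardinalOrder

variable {α : Type u} [LinearOrder α] [WellFoundedLT α] [IsRegularCardinalOrder α]

theorem isCofinal_iff_mk_eq {s : Set α} : IsCofinal s ↔ #s = #α := by
  refine ⟨fun hs => (mk_set_le s).antisymm (cof_eq_cardinalMk (α := α) ▸ cof_le hs), fun hs => ?_⟩
  by_contra h
  obtain ⟨a, ha⟩ := not_isCofinal_iff.1 h
  exact ((mk_le_mk_of_subset ha).trans_lt (mk_Iio_lt a ord_cardinalMk)).ne hs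

theorem exists_forall_lt_of_mk_lt {s : Set α} (hs : #s < #α) : ∃ a, ∀ x ∈ s, x < a :=
  not_isCofinal_iff.1 fun h => hs.ne (isCofinal_iff_mk_eq.1 h)

variable [NoMaxOrder α]

theorem mk_Iic_lt (a : α) : #(Iic a) < #α := by
  obtain ⟨b, hab⟩ := exists_gt a
  exact (mk_le_mk_of_subset (Iic_subset_Iio.2 hab)).trans_lt (mk_Iio_lt b ord_cardinalMk)

theorem exists_forall_inter_Ioo_nonempty {ι : Type u} (B : ι → Set α) {s : Set ι}
    (hs : #s < #α) (hB : ∀ i ∈ s, IsCofinal (B i)) :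
    ∃ g : α → α, ∀ β, ∀ i ∈ s, (B i ∩ Ioo β (g β)).Nonempty := by
  suffices ∀ β, ∃ γ, ∀ i ∈ s, (B i ∩ Ioo β γ).Nonempty by
    choose g hg using this
    exact ⟨g, hg⟩
  intro β
  choose p hpB hβp using fun i : s => (hB i i.2).exists_gt β
  obtain ⟨γ, hγ⟩ := exists_forall_lt_of_mk_lt (mk_range_le.trans_lt hs)
  exact ⟨γ, fun i hi => ⟨p ⟨i, hi⟩, hpB ⟨i, hi⟩, hβp ⟨i, hi⟩, hγ _ (mem_range_self _)⟩⟩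

theorem exists_isCofinal_isSparseFor (f : α → α) : ∃ E, IsCofinal E ∧ IsSparseFor f E := by
  obtain ⟨E, hE⟩ := zorn_subset {E : Set α | IsSparseFor f E} fun c hc hchain =>
    ⟨⋃₀ c, fun e ⟨s, hs, he⟩ e' ⟨s', hs', he'⟩ hee' =>
      (hchain.total hs hs').elim (fun h => hc hs' (h he) he' hee') (fun h => hc hs he (h he') hee'),
      fun _ => subset_sUnion_of_mem⟩
  refine ⟨E, fun γ => ?_, hE.prop⟩
  by_contra! hγ
  -- A bounded `E` can be extended by a point above `γ` and above `f` on `Iic γ`.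
  obtain ⟨δ₀, hδ₀⟩ := exists_forall_lt_of_mk_lt (mk_image_le.trans_lt (mk_Iic_lt γ))
  obtain ⟨δ, hδ⟩ := exists_gt (max δ₀ γ)
  have hγδ : γ < δ := (le_max_right _ _).trans_lt hδ
  refine (hγ δ (hE.mem_of_prop_insert ?_)).not_gt hγδ
  rintro e (rfl | he) e' (rfl | he') hee' x hx
  · exact absurd hee' (lt_irrefl _)
  · exact absurd ((hγ e' he').trans hγδ) hee'.not_gt
  · exact (hδ₀ _ (mem_image_of_mem f (hx.trans (hγ e he).le))).trans
      ((le_max_left _ _).trans_lt hδ)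
  · exact hE.prop he he' hee' x hx

theorem exists_splitting_set_of_mk_lt {𝒜 : Set (Set α)} (h𝒜 : #𝒜 < #α)
    (hcof : ∀ B ∈ 𝒜, IsCofinal B) :
    ∃ S : Set α, #S = #α ∧ ∀ B ∈ 𝒜, #↥(S ∩ B) = #α ∧ #↥(Sᶜ ∩ B) = #α := by
  have : Nonempty α := mk_ne_zero_iff.1 (zero_le.trans_lt h𝒜).ne'
  obtain ⟨g, hg⟩ := exists_forall_inter_Ioo_nonempty id h𝒜 hcof
  obtain ⟨E, hE, hS⟩ := exists_isCofinal_isSparseFor g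
  -- `B` meets each block `(e, hE.next e)`, `e ∈ E`, since it meets `(e, g e)`.
  have hR : ∀ B ∈ 𝒜, hE.next '' E ⊆ hE.next '' B := by
    rintro B hB _ ⟨e, he, rfl⟩
    obtain ⟨p, hpB, hep, hpg⟩ := hg e B hB
    exact ⟨p, hpB, hE.next_eq_of_le_of_lt hep.le
      (hpg.trans (hS he (hE.next_mem e) (hE.lt_next e) e le_rfl))⟩
  have hRcof : IsCofinal (hE.next '' E) := fun a => by
    obtain ⟨e, he, hae⟩ := hE a
    exact ⟨_, mem_image_of_mem _ he, hae.trans (hE.lt_next e).le⟩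
  have hRα := isCofinal_iff_mk_eq.1 hRcof
  obtain ⟨T, hTR, hT, hRT⟩ := exists_subset_mk_eq_mk_diff_eq (hRα ▸ aleph0_le_mk α)
  rw [hRα] at hT hRT
  refine ⟨hE.next ⁻¹' T, ?_, fun B hB => ⟨?_, ?_⟩⟩ <;> refine (mk_set_le _).antisymm ?_
  · rw [← hT]
    exact (mk_le_mk_preimage_inter subset_rfl hTR).trans (mk_le_mk_of_subset inter_subset_left)
  · rw [← hT]
    exact mk_le_mk_preimage_inter subset_rfl (hTR.trans (hR B hB))
  · rw [← hRT]
    exact mk_le_mk_preimage_inter (fun x hx => hx.2) (sdiff_subset.trans (hR B hB))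

end RegularCardinalOrder

section Reaping

variable {κ : Cardinal.{u}}

theorem Cardinal.IsRegular.isRegularCardinalOrder_toType (hreg : κ.IsRegular) :
    IsRegularCardinalOrder κ.ord.ToType :=
  ⟨by rw [Ordinal.type_toType, Ordinal.cof_toType, hreg.cof_ord]⟩

theorem exists_unreaped_mk_eq_rNumber (hκ : κ ≠ 0) :
    ∃ A : Set (Set κ.ord.ToType), (∀ y ∈ A, #y = κ) ∧ Unreaped κ A ∧ #A = rNumber κ := by
  refine csInf_mem (s := {c | ∃ A : Set (Set κ.ord.ToType), (∀ y ∈ A, #↥y = κ) ∧ Unreaped κ A ∧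
    #↥A = c}) ⟨_, {S | #↥S = κ}, fun _ h => h, fun ⟨S, hS, hsplit⟩ => hκ ?_, rfl⟩
  simpa using (hsplit S hS).2.symm

theorem Unreaped.exists_not_splits {A : Set (Set κ.ord.ToType)} (h : Unreaped κ A)
    (S : Set κ.ord.ToType) : ∃ y ∈ A, ¬ Splits κ S y := by
  by_contra! hS
  rcases ((mk_set_le S).trans_eq (mk_ord_toType κ)).lt_or_eq with hlt | heq
  · rcases A.eq_empty_or_nonempty with rfl | ⟨y, hy⟩
    · exact h ⟨univ, by simp, by simp⟩
    · exact ((mk_le_mk_of_subset inter_subset_left).trans_lt hlt).ne (hS y hy).1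
  · exact h ⟨S, heq, hS⟩

theorem Unreaped.le_mk (hreg : κ.IsRegular) {A : Set (Set κ.ord.ToType)} (hA : ∀ y ∈ A, #y = κ)
    (h : Unreaped κ A) : κ ≤ #A := by
  have := hreg.isRegularCardinalOrder_toType
  have := noMaxOrder hreg.aleph0_le
  by_contra! hlt
  obtain ⟨S, hS, hsplit⟩ := exists_splitting_set_of_mk_lt (𝒜 := A) (by rwa [mk_ord_toType])
    fun y hy => isCofinal_iff_mk_eq.2 (by rw [hA y hy, mk_ord_toType])
  simp only [mk_ord_toType] at hS hsplit
  exact h ⟨S, hS, hsplit⟩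

theorem rNumber_le_mk_of_base {U : Ultrafilter κ.ord.ToType} (hU : ∀ X ∈ U, #X = κ)
    {𝓑 : Set (Set κ.ord.ToType)} (h𝓑U : ∀ b ∈ 𝓑, b ∈ U) (h𝓑 : ∀ X ∈ U, ∃ b ∈ 𝓑, b ⊆ X) :
    rNumber κ ≤ #𝓑 := by
  refine csInf_le' ⟨𝓑, fun b hb => hU b (h𝓑U b hb), ?_, rfl⟩
  rintro ⟨S, -, hS⟩
  -- `Tᶜ ∩ b = ∅`, whereas `κ ≠ 0` as `b ∈ U`.
  have hnot : ∀ T ∈ U, ∃ b ∈ 𝓑, #↥(Tᶜ ∩ b) ≠ κ := by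
    intro T hT
    obtain ⟨b, hb, hbT⟩ := h𝓑 T hT
    refine ⟨b, hb, fun hκ => U.empty_notMem ?_⟩
    have hempty : Tᶜ ∩ b = ∅ := eq_empty_of_forall_notMem fun x hx => hx.1 (hbT hx.2)
    have h0 : #↥b = 0 := by rw [hU b (h𝓑U b hb), ← hκ, hempty]; exact mk_eq_zero _
    exact mk_set_eq_zero_iff.1 h0 ▸ h𝓑U b hb
  rcases U.mem_or_compl_mem S with hSU | hSU
  · obtain ⟨b, hb, hne⟩ := hnot S hSU
    exact hne (hS b hb).2
  · obtain ⟨b, hb, hne⟩ := hnot Sᶜ hSU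
    exact hne (by rw [compl_compl]; exact (hS b hb).1)

theorem isCofinal_of_not_almostLE (hreg : κ.IsRegular) {f g : κ.ord.ToType → κ.ord.ToType}
    (h : ¬ AlmostLE κ f g) : IsCofinal {β | g β < f β} := by
  have := hreg.isRegularCardinalOrder_toType
  refine isCofinal_iff_mk_eq.2 ((mk_set_le _).antisymm ?_)
  rw [mk_ord_toType]
  exact not_lt.1 h

theorem exists_forall_not_almostLE {ι : Type u} (G : ι → κ.ord.ToType → κ.ord.ToType)
    (hG : #ι < dNumber κ) : ∃ f, ∀ i, ¬ AlmostLE κ f (G i) := by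
  by_contra! h
  have hd : dNumber κ ≤ #↥(range G) := csInf_le' ⟨range G, fun f => ?_, rfl⟩
  · exact hd.not_gt (mk_range_le.trans_lt hG)
  obtain ⟨i, hi⟩ := h f
  exact ⟨G i, mem_range_self i, hi⟩

theorem Unreaped.mem_or_compl_mem_imageTailFilter (hreg : κ.IsRegular)
    {A : Set (Set κ.ord.ToType)} (h : Unreaped κ A) {φ : κ.ord.ToType → κ.ord.ToType}
    (hφ : Monotone φ) (S : Set κ.ord.ToType) :
    S ∈ imageTailFilter φ (fun y : A => (y : Set κ.ord.ToType)) ∨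
      Sᶜ ∈ imageTailFilter φ (fun y : A => (y : Set κ.ord.ToType)) := by
  have := hreg.isRegularCardinalOrder_toType
  have bounded : ∀ T : Set κ.ord.ToType, #↥T ≠ κ → ∃ δ, ∀ p ∈ T, p < δ := fun T hT =>
    exists_forall_lt_of_mk_lt ((mk_set_le T).lt_of_ne (by rwa [mk_ord_toType]))
  obtain ⟨y, hy, hns⟩ := h.exists_not_splits (φ ⁻¹' S)
  rcases not_and_or.1 hns with hS | hS
  · obtain ⟨δ, hδ⟩ := bounded _ hS
    exact .inr (compl_mem_imageTailFilter hφ (i := ⟨y, hy⟩) hδ)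
  · obtain ⟨δ, hδ⟩ := bounded _ hS
    exact .inl (compl_compl S ▸ compl_mem_imageTailFilter hφ (T := Sᶜ) (i := ⟨y, hy⟩) hδ)

theorem exists_ultrafilter_base_mk_le (hreg : κ.IsRegular) {A : Set (Set κ.ord.ToType)}
    (hA : ∀ y ∈ A, #↥y = κ) (hunr : Unreaped κ A) (hAd : #↥A < dNumber κ) :
    ∃ U : Ultrafilter κ.ord.ToType, (∀ X ∈ U, #↥X = κ) ∧ ∃ 𝓑 : Set (Set κ.ord.ToType),
      (∀ b ∈ 𝓑, b ∈ U) ∧ (∀ X ∈ U, ∃ b ∈ 𝓑, b ⊆ X) ∧ #↥𝓑 ≤ #↥A := by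
  have := hreg.isRegularCardinalOrder_toType
  have := noMaxOrder hreg.aleph0_le
  have hκ : #κ.ord.ToType = κ := mk_ord_toType κ
  have hκA : κ ≤ #↥A := hunr.le_mk hreg hA
  have : Infinite A := infinite_iff.2 (hreg.aleph0_le.trans hκA)
  have : Nonempty κ.ord.ToType := mk_ne_zero_iff.1 (hκ.trans_ne hreg.pos.ne')
  choose g hg using fun t : Finset A =>
    exists_forall_inter_Ioo_nonempty (fun y : A => (y : Set κ.ord.ToType)) (s := t) ((lt_aleph0_of_finite _).trans_le (hreg.aleph0_le.trans_eq hκ.symm))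
    fun y _ => isCofinal_iff_mk_eq.2 ((hA y y.2).trans hκ.symm)
  obtain ⟨f, hf⟩ := exists_forall_not_almostLE (fun t => g t ∘ g t)
    (by rwa [mk_finset_of_infinite])
  obtain ⟨E, hE, hS⟩ := exists_isCofinal_isSparseFor f
  set F := imageTailFilter hE.next fun y : A => (y : Set κ.ord.ToType)
  have hFκ : ∀ X ∈ F, #↥X = κ := fun X hX => (isCofinal_iff_mk_eq.1
    (isCofinal_of_mem_imageTailFilter _ _ (fun t => hS.isCofinal_biInter_image_next hE (hg t)
      (isCofinal_of_not_almostLE hreg (hf t))) hX)).trans hκ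
  have hF := hasBasis_imageTailFilter hE.next fun y : A => (y : Set κ.ord.ToType)
  let U := Ultrafilter.ofComplNotMemIff F fun S =>
    ⟨(hunr.mem_or_compl_mem_imageTailFilter hreg hE.next_mono S).resolve_right,
      fun hS hSc => hreg.pos.ne (by simpa using hFκ _ (inter_mem hS hSc))⟩
  refine ⟨U, hFκ, range fun i : Finset A × κ.ord.ToType =>
    (⋂ j ∈ (i.1 : Set A), hE.next '' j) ∩ Ioi i.2, ?_, fun X hX => ?_, ?_⟩
  · rintro _ ⟨i, rfl⟩
    exact hF.mem_of_mem trivial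
  · obtain ⟨i, -, hi⟩ := hF.mem_iff.1 hX
    exact ⟨_, mem_range_self i, hi⟩
  · refine mk_range_le.trans ?_
    rw [mk_prod, lift_id, lift_id, mk_finset_of_infinite, hκ]
    exact (mul_eq_left (hreg.aleph0_le.trans hκA) hκA hreg.pos.ne').le

end Reaping

theorem stmt7 (κ : Cardinal) (hreg : κ.IsRegular)
    (h : rNumber κ < dNumber κ) : rNumber κ = uNumber κ := by
  obtain ⟨A, hA, hunr, hAr⟩ := exists_unreaped_mk_eq_rNumber hreg.pos.ne'
  obtain ⟨U, hU, 𝓑, h𝓑U, h𝓑, h𝓑A⟩ := exists_ultrafilter_base_mk_le hreg hA hunr (hAr ▸ h)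
  have hu : uNumber κ ≤ #↥𝓑 := csInf_le' ⟨U, hU, 𝓑, h𝓑U, h𝓑, rfl⟩
  have hr : rNumber κ ≤ uNumber κ := by
    refine le_csInf ⟨_, U, hU, 𝓑, h𝓑U, h𝓑, rfl⟩ ?_
    rintro _ ⟨U', hU', 𝓑', h𝓑U', h𝓑', rfl⟩
    exact rNumber_le_mk_of_base hU' h𝓑U' h𝓑'
  exact hr.antisymm (hu.trans (h𝓑A.trans_eq hAr))
end

section
/- Let κ be a regular cardinal, let 𝓗 ⊆ κ^κ be a big family with |𝓗| ≤ λ where λ = 𝔯_κ < 𝔡_κ. Then there is a uniform ultrafilter 𝒰 over κ with a base of size at most λ; in particular, any filter generated by finite intersections of 𝓑 = {{β < κ : f(β) ≤ g(β)} : f ∈ 𝓗}, for a suitable g witnessing that 𝓗 is not finitely dominating, extends to an ultrafilter with Ch(𝒰) ≤ λ. -/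
open Cardinal

/-- A family `H ⊆ κ^κ` is big iff for every `F ⊆ [κ]^κ` and every `g : κ → κ` such that
`{β < κ : f(β) ≤ g(β)} ∈ F` for every `f ∈ H`, there is an increasing `<κ`-to-one
function `h : κ → κ` for which `{h''(y ∩ z) : y, z ∈ F}` is an unreaped family. -/
def BigFamily (κ : Cardinal) (H : Set (κ.ord.ToType → κ.ord.ToType)) : Prop :=
  ∀ (F : Set (Set κ.ord.ToType)) (g : κ.ord.ToType → κ.ord.ToType),
    (∀ y ∈ F, #↥y = κ) →
    (∀ f ∈ H, {β : κ.ord.ToType | f β ≤ g β} ∈ F) →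
    ∃ h : κ.ord.ToType → κ.ord.ToType, Monotone h ∧
      (∀ ξ : κ.ord.ToType, #↥(h ⁻¹' {ξ}) < κ) ∧
      Unreaped κ {w : Set κ.ord.ToType | ∃ y ∈ F, ∃ z ∈ F, w = h '' (y ∩ z)}

/-- The characteristic `Ch(U)` of an ultrafilter: the minimal cardinality of a base. -/
noncomputable def ultraCh {α : Type*} (U : Ultrafilter α) : Cardinal :=
  sInf {c : Cardinal | ∃ B : Set (Set α),
    (∀ b ∈ B, b ∈ U) ∧ (∀ A ∈ U, ∃ b ∈ B, b ⊆ A) ∧ #↥B = c}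

universe u

namespace Cardinal

variable {κ : Cardinal.{u}}

theorem mk_set_ord_toType_le (s : Set κ.ord.ToType) : #s ≤ κ :=
  (mk_set_le s).trans_eq (mk_ord_toType κ)

theorem mk_Iio_ord_toType_lt (ξ : κ.ord.ToType) : #(Set.Iio ξ) < κ := by
  simpa using mk_Iio_lt ξ

theorem exists_mem_le_of_mk_eq {T : Set κ.ord.ToType} (hT : #T = κ) (ξ : κ.ord.ToType) :
    ∃ γ ∈ T, ξ ≤ γ := by
  by_contra! hT_lt
  exact (hT ▸ mk_le_mk_of_subset hT_lt).not_gt (mk_Iio_ord_toType_lt ξ)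

theorem exists_forall_lt_of_mk_lt (hreg : κ.IsRegular) {s : Set κ.ord.ToType} (hs : #s < κ) :
    ∃ ξ, ∀ γ ∈ s, γ < ξ := by
  by_contra! hcof
  have := Order.cof_le (s := s) hcof
  rw [Ordinal.cof_toType, hreg.cof_ord] at this
  exact this.not_gt hs

theorem exists_forall_le_imp_lt (hreg : κ.IsRegular) (x : κ.ord.ToType → κ.ord.ToType) :
    ∃ x' : κ.ord.ToType → κ.ord.ToType, ∀ β γ, γ ≤ β → x γ < x' β := by
  have hIic (β : κ.ord.ToType) : #(x '' Set.Iic β) < κ := by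
    refine mk_image_le.trans_lt ?_
    rw [← Set.Iio_insert]
    exact mk_insert_le.trans_lt <| add_lt_of_lt hreg.aleph0_le (mk_Iio_ord_toType_lt β)
      (one_lt_aleph0.trans_le hreg.aleph0_le)
  choose x' hx' using fun β => exists_forall_lt_of_mk_lt hreg (hIic β)
  exact ⟨x', fun β γ hγ => hx' β _ ⟨γ, hγ, rfl⟩⟩

theorem mk_image_eq_of_mk_preimage_lt (hreg : κ.IsRegular) {h : κ.ord.ToType → κ.ord.ToType}
    (hfib : ∀ ξ, #(h ⁻¹' {ξ}) < κ) {w : Set κ.ord.ToType} (hw : #w = κ) : #(h '' w) = κ := by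
  refine (mk_set_ord_toType_le _).antisymm (not_lt.mp fun hlt => ?_)
  have hcover : w ⊆ ⋃ ξ ∈ h '' w, h ⁻¹' {ξ} := fun x hx =>
    Set.mem_biUnion (Set.mem_image_of_mem h hx) rfl
  have hsup : (⨆ ξ : h '' w, #(h ⁻¹' {(ξ : κ.ord.ToType)})) < κ :=
    iSup_lt_of_lt_cof_ord (hlt.trans_eq hreg.cof_ord.symm) fun ξ => hfib _
  have := ((mk_le_mk_of_subset hcover).trans (mk_biUnion_le _ _)).trans_lt
    (mul_lt_of_lt hreg.aleph0_le hlt hsup)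
  exact (hw ▸ this).false

end Cardinal

section Dominating

variable {κ : Cardinal.{u}}

theorem dNumber_le_mk {ι : Type u} (d : ι → κ.ord.ToType → κ.ord.ToType)
    (hd : ∀ x, ∃ i, AlmostLE κ x (d i)) : dNumber κ ≤ #ι := by
  refine (?_ : dNumber κ ≤ #(Set.range d)).trans mk_range_le
  refine csInf_le' ⟨_, fun x => ?_, rfl⟩
  obtain ⟨i, hi⟩ := hd x
  exact ⟨d i, ⟨i, rfl⟩, hi⟩

def FinitelyUndominated (κ : Cardinal) (H : Set (κ.ord.ToType → κ.ord.ToType))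
    (g : κ.ord.ToType → κ.ord.ToType) : Prop :=
  ∀ u : Finset (κ.ord.ToType → κ.ord.ToType), ↑u ⊆ H →
    ∀ hne : u.Nonempty, ¬ AlmostLE κ g (fun β => u.sup' hne fun f => f β)

variable {H : Set (κ.ord.ToType → κ.ord.ToType)}

theorem FinitelyUndominated.mono {g g' : κ.ord.ToType → κ.ord.ToType}
    (hg : FinitelyUndominated κ H g) (hle : g ≤ g') : FinitelyUndominated κ H g' :=
  fun u hu hne halm => hg u hu hne <|
    (mk_le_mk_of_subset fun β (hβ : _ < g β) => hβ.trans_le (hle β)).trans_lt halm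

theorem exists_finitelyUndominated (hH : #(Finset H) < dNumber κ) :
    ∃ g, FinitelyUndominated κ H g := by
  classical
  by_contra! hdom
  simp only [FinitelyUndominated, not_forall, not_not] at hdom
  refine (dNumber_le_mk (ι := {v : Finset H // v.Nonempty})
    (fun v β => v.1.sup' v.2 fun f => f.1 β) fun x => ?_).trans (mk_subtype_le _) |>.not_gt hH
  obtain ⟨u, huH, hne, hx⟩ := hdom x
  have hu : (u.subtype (· ∈ H)).map (Function.Embedding.subtype _) = u :=
    Finset.subtype_map_of_mem fun f hf => huH hf
  have hne' : ((u.subtype (· ∈ H)).map (Function.Embedding.subtype _)).Nonempty := by rwa [hu]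
  refine ⟨⟨_, Finset.map_nonempty.mp hne'⟩, ?_⟩
  convert hx using 2 with β
  exact (Finset.sup'_map (fun f => f β) hne').symm.trans
    (Finset.sup'_congr _ hu fun _ _ => rfl)

end Dominating

section Families

variable {κ : Cardinal.{u}} {H : Set (κ.ord.ToType → κ.ord.ToType)}
  {g : κ.ord.ToType → κ.ord.ToType}

def finiteInterLeSets (H : Set (κ.ord.ToType → κ.ord.ToType)) (g : κ.ord.ToType → κ.ord.ToType) :
    Set (Set κ.ord.ToType) :=
  Set.range fun v : Finset H => {β | ∀ f ∈ v, (f : κ.ord.ToType → κ.ord.ToType) β ≤ g β}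

theorem setOf_le_mem_finiteInterLeSets {f : κ.ord.ToType → κ.ord.ToType} (hf : f ∈ H) :
    {β | f β ≤ g β} ∈ finiteInterLeSets H g :=
  ⟨{⟨f, hf⟩}, by simp⟩

theorem inter_mem_finiteInterLeSets {y z : Set κ.ord.ToType} (hy : y ∈ finiteInterLeSets H g)
    (hz : z ∈ finiteInterLeSets H g) : y ∩ z ∈ finiteInterLeSets H g := by
  classical
  obtain ⟨v, rfl⟩ := hy
  obtain ⟨w, rfl⟩ := hz
  refine ⟨v ∪ w, Set.ext fun β => ?_⟩
  simp only [Finset.mem_union, Set.mem_ofPred_eq, Set.mem_inter_iff]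
  exact ⟨fun h => ⟨fun f hf => h f (.inl hf), fun f hf => h f (.inr hf)⟩,
    fun h f => Or.rec (h.1 f) (h.2 f)⟩

theorem univ_mem_finiteInterLeSets : Set.univ ∈ finiteInterLeSets H g :=
  ⟨∅, by simp⟩

theorem FinitelyUndominated.mk_eq_of_mem_finiteInterLeSets (hg : FinitelyUndominated κ H g)
    {y : Set κ.ord.ToType} (hy : y ∈ finiteInterLeSets H g) : #y = κ := by
  classical
  obtain ⟨v, rfl⟩ := hy
  refine (mk_set_ord_toType_le _).antisymm ?_
  rcases v.eq_empty_or_nonempty with rfl | hv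
  · simp
  have hsub : ↑(v.map (Function.Embedding.subtype _)) ⊆ H := by simp
  have hmax := not_lt.mp (hg _ hsub (Finset.map_nonempty.mpr hv))
  refine hmax.trans (mk_le_mk_of_subset fun β hβ f hf => ?_)
  exact (Finset.le_sup' (fun f : κ.ord.ToType → κ.ord.ToType => f β)
    (Finset.mem_map_of_mem (Function.Embedding.subtype _) hf)).trans hβ.le

end Families

section Big

variable {κ : Cardinal.{u}} {H : Set (κ.ord.ToType → κ.ord.ToType)}

theorem exists_splits (hκ : ℵ₀ ≤ κ) {T : Set κ.ord.ToType} (hT : #T = κ) :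
    ∃ S : Set κ.ord.ToType, #S = κ ∧ Splits κ S T := by
  obtain ⟨e⟩ : Nonempty (κ.ord.ToType ⊕ κ.ord.ToType ≃ T) := by
    rw [← Cardinal.eq, mk_sum, lift_id, mk_ord_toType, hT, add_eq_self hκ]
  have he : Function.Injective (Subtype.val ∘ e) := Subtype.val_injective.comp e.injective
  have hmk {ι : κ.ord.ToType → κ.ord.ToType ⊕ κ.ord.ToType} (hι : Function.Injective ι) :
      #(Set.range (Subtype.val ∘ e ∘ ι)) = κ := by
    rw [← Function.comp_assoc, mk_range_eq _ (he.comp hι), mk_ord_toType]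
  refine ⟨Set.range (Subtype.val ∘ e ∘ Sum.inl), hmk Sum.inl_injective,
    (mk_set_ord_toType_le _).antisymm ?_, (mk_set_ord_toType_le _).antisymm ?_⟩
  · refine (hmk Sum.inl_injective).ge.trans (mk_le_mk_of_subset ?_)
    rintro _ ⟨a, rfl⟩
    exact ⟨⟨a, rfl⟩, (e _).2⟩
  · refine (hmk Sum.inr_injective).ge.trans (mk_le_mk_of_subset ?_)
    rintro _ ⟨a, rfl⟩
    refine ⟨?_, (e _).2⟩
    rintro ⟨b, hb⟩
    exact Sum.inl_ne_inr (he hb)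

theorem BigFamily.not_forall_le (hreg : κ.IsRegular) (hbig : BigFamily κ H)
    (g : κ.ord.ToType → κ.ord.ToType) : ¬ ∀ f ∈ H, f ≤ g := by
  intro hg
  obtain ⟨h, -, hfib, hunr⟩ := hbig {Set.univ} g (by simp)
    fun f hf => by simpa [Set.eq_univ_iff_forall] using Pi.le_def.mp (hg f hf)
  obtain ⟨S, hS, hsplit⟩ :=
    exists_splits hreg.aleph0_le (mk_image_eq_of_mk_preimage_lt hreg hfib (w := Set.univ) (by simp))
  exact hunr ⟨S, hS, by simpa using hsplit⟩

theorem BigFamily.le_mk (hreg : κ.IsRegular) (hbig : BigFamily κ H) : κ ≤ #H := by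
  by_contra! hH
  choose g hg using fun β => exists_forall_lt_of_mk_lt hreg
    (mk_image_le.trans_lt hH : #((fun f : κ.ord.ToType → κ.ord.ToType => f β) '' H) < κ)
  exact hbig.not_forall_le hreg g fun f hf β => (hg β _ ⟨f, hf, rfl⟩).le

end Big

section Ultrafilter

open Filter

variable {κ : Cardinal.{u}}

theorem mk_eq_of_mem_of_le_atTop (hreg : κ.IsRegular) {l : Filter κ.ord.ToType} [l.NeBot]
    (hl : l ≤ atTop) {X : Set κ.ord.ToType} (hX : X ∈ l) : #X = κ := by
  refine (mk_set_ord_toType_le X).antisymm (not_lt.mp fun hlt => ?_)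
  obtain ⟨ξ, hξ⟩ := exists_forall_lt_of_mk_lt hreg hlt
  obtain ⟨γ, hγX, hγξ⟩ := nonempty_of_mem (inter_mem hX (hl (Ici_mem_atTop ξ)))
  exact (hξ γ hγX).not_ge hγξ

theorem exists_ultrafilter_le_atTop_of_directedOn (hκ : κ ≠ 0) {A : Set (Set κ.ord.ToType)}
    (hA : A.Nonempty) (hdir : DirectedOn (· ⊇ ·) A) (hsize : ∀ a ∈ A, #a = κ) :
    ∃ U : Ultrafilter κ.ord.ToType, (∀ a ∈ A, a ∈ U) ∧ (U : Filter κ.ord.ToType) ≤ atTop := by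
  have : Nonempty κ.ord.ToType := mk_ne_zero_iff.mp (by rwa [mk_ord_toType])
  have hbasis := (hasBasis_biInf_principal (s := id) hdir hA).inf atTop_basis
  have : ((⨅ a ∈ A, 𝓟 a) ⊓ atTop).NeBot := hbasis.neBot_iff.mpr fun {p} hp =>
    let ⟨γ, hγ, hξγ⟩ := exists_mem_le_of_mk_eq (hsize p.1 hp.1) p.2
    ⟨γ, hγ, hξγ⟩
  refine ⟨.of ((⨅ a ∈ A, 𝓟 a) ⊓ atTop), fun a ha => ?_, (Ultrafilter.of_le _).trans inf_le_right⟩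
  exact Ultrafilter.of_le _
    (mem_inf_of_left (mem_iInf_of_mem a (mem_iInf_of_mem ha (mem_principal_self a))))

variable {U : Ultrafilter κ.ord.ToType}

theorem exists_inter_Ici_subset_of_unreaped (hreg : κ.IsRegular)
    (hU : (U : Filter κ.ord.ToType) ≤ atTop) {A : Set (Set κ.ord.ToType)} (hAU : ∀ a ∈ A, a ∈ U)
    (hunr : Unreaped κ A) {X : Set κ.ord.ToType} (hX : X ∈ U) :
    ∃ a ∈ A, ∃ ξ, a ∩ Set.Ici ξ ⊆ X := by
  obtain ⟨a, ha, hnsplit⟩ : ∃ a ∈ A, ¬ Splits κ X a := by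
    by_contra! h
    exact hunr ⟨X, mk_eq_of_mem_of_le_atTop hreg hU hX, h⟩
  have hXa : #↥(X ∩ a) = κ := mk_eq_of_mem_of_le_atTop hreg hU (inter_mem hX (hAU a ha))
  have hsmall : #↥(Xᶜ ∩ a) < κ := (mk_set_ord_toType_le _).lt_of_ne fun h => hnsplit ⟨hXa, h⟩
  obtain ⟨ξ, hξ⟩ := exists_forall_lt_of_mk_lt hreg hsmall
  exact ⟨a, ha, ξ, fun γ ⟨hγa, hγξ⟩ => by_contra fun hγX => (hξ γ ⟨hγX, hγa⟩).not_ge hγξ⟩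

theorem exists_ultrafilter_base_of_unreaped (hreg : κ.IsRegular) {A : Set (Set κ.ord.ToType)}
    (hunr : Unreaped κ A) (hA : A.Nonempty) (hdir : DirectedOn (· ⊇ ·) A)
    (hsize : ∀ a ∈ A, #a = κ) :
    ∃ U : Ultrafilter κ.ord.ToType, (U : Filter κ.ord.ToType) ≤ atTop ∧
      ∃ B : Set (Set κ.ord.ToType),
        (∀ b ∈ B, b ∈ U) ∧ (∀ X ∈ U, ∃ b ∈ B, b ⊆ X) ∧ #B ≤ #A * κ := by
  obtain ⟨U, hAU, hU⟩ := exists_ultrafilter_le_atTop_of_directedOn hreg.pos.ne' hA hdir hsize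
  refine ⟨U, hU, Set.range fun p : A × κ.ord.ToType => p.1.1 ∩ Set.Ici p.2, ?_, fun X hX => ?_, ?_⟩
  · rintro _ ⟨⟨⟨a, ha⟩, ξ⟩, rfl⟩
    exact inter_mem (hAU a ha) (hU (Ici_mem_atTop ξ))
  · obtain ⟨a, ha, ξ, hsub⟩ := exists_inter_Ici_subset_of_unreaped hreg hU hAU hunr hX
    exact ⟨_, ⟨⟨⟨a, ha⟩, ξ⟩, rfl⟩, hsub⟩
  · exact mk_range_le.trans_eq (by rw [mk_prod, lift_id, lift_id, mk_ord_toType])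

theorem exists_forall_setOf_le_mem_of_mk_lt_dNumber (hreg : κ.IsRegular)
    (hU : (U : Filter κ.ord.ToType) ≤ atTop) {B : Set (Set κ.ord.ToType)} (hBU : ∀ b ∈ B, b ∈ U)
    (hB : ∀ X ∈ U, ∃ b ∈ B, b ⊆ X) {H : Set (κ.ord.ToType → κ.ord.ToType)}
    (hHB : #(H × B) < dNumber κ) :
    ∃ g : κ.ord.ToType → κ.ord.ToType, ∀ f ∈ H, {β | f β ≤ g β} ∈ U := by
  by_contra! hcon
  have hsel (b : B) (β : κ.ord.ToType) : ∃ γ ∈ (b : Set κ.ord.ToType), β ≤ γ :=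
    nonempty_of_mem (inter_mem (hBU b b.2) (hU (Ici_mem_atTop β)))
  choose sel hsel_mem hsel_ge using hsel
  -- `x < f ∘ sel b` everywhere when `x'` majorizes `x` on initial segments and `b ⊆ {x' < f}`
  refine (dNumber_le_mk (fun p : H × B => fun β => p.1.1 (sel p.2 β)) fun x => ?_).not_gt hHB
  obtain ⟨x', hx'⟩ := exists_forall_le_imp_lt hreg x
  obtain ⟨f, hf, hfU⟩ := hcon x'
  obtain ⟨b, hb, hbsub⟩ := hB _ (U.compl_mem_iff_notMem.mpr hfU)
  refine ⟨(⟨f, hf⟩, ⟨b, hb⟩), ?_⟩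
  have hempty : {β | f (sel ⟨b, hb⟩ β) < x β} = ∅ := Set.eq_empty_of_forall_notMem fun β hβ =>
    (hx' _ β (hsel_ge _ β)).trans (not_le.mp (hbsub (hsel_mem ⟨b, hb⟩ β))) |>.not_gt hβ
  simp [AlmostLE, hempty, hreg.pos]

end Ultrafilter

section ImageInter

variable {α β : Type u} {F : Set (Set α)}

theorem directedOn_image_inter (hF : ∀ y ∈ F, ∀ z ∈ F, y ∩ z ∈ F) (h : α → β) :
    DirectedOn (· ⊇ ·) {w | ∃ y ∈ F, ∃ z ∈ F, w = h '' (y ∩ z)} := by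
  rintro _ ⟨y₁, hy₁, z₁, hz₁, rfl⟩ _ ⟨y₂, hy₂, z₂, hz₂, rfl⟩
  exact ⟨_, ⟨_, hF _ hy₁ _ hz₁, _, hF _ hy₂ _ hz₂, rfl⟩,
    Set.image_mono Set.inter_subset_left, Set.image_mono Set.inter_subset_right⟩

theorem mk_setOf_image_inter_le (h : α → β) :
    #{w | ∃ y ∈ F, ∃ z ∈ F, w = h '' (y ∩ z)} ≤ #F * #F := by
  refine (mk_le_mk_of_subset ?_).trans (mk_range_le (f := fun p : F × F => h '' (p.1.1 ∩ p.2.1)))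
    |>.trans_eq (by rw [mk_prod, lift_id])
  rintro _ ⟨y, hy, z, hz, rfl⟩
  exact ⟨(⟨y, hy⟩, ⟨z, hz⟩), rfl⟩

end ImageInter

theorem ultraCh_le_mk {α : Type u} {U : Ultrafilter α} {B : Set (Set α)} (hBU : ∀ b ∈ B, b ∈ U)
    (hB : ∀ A ∈ U, ∃ b ∈ B, b ⊆ A) : ultraCh U ≤ #B :=
  csInf_le' ⟨B, hBU, hB, rfl⟩

/-- Let `κ` be regular and `H ⊆ κ^κ` a big family with `|H| ≤ λ`, where
`λ = 𝔯_κ < 𝔡_κ`.  Then there is a uniform ultrafilter over `κ` with a base of size at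
most `λ`; in particular, there is a `g` witnessing that `H` is not finitely dominating
such that the filter generated by (finite intersections of)
`B = {{β < κ : f(β) ≤ g(β)} : f ∈ H}` extends to an ultrafilter `U` with `Ch(U) ≤ λ`. -/
theorem stmt19 (κ lam : Cardinal) (hreg : κ.IsRegular)
    (H : Set (κ.ord.ToType → κ.ord.ToType))
    (hbig : BigFamily κ H) (hHcard : #↥H ≤ lam)
    (hlam : lam = rNumber κ) (hrd : rNumber κ < dNumber κ) :
    (∃ U : Ultrafilter κ.ord.ToType, (∀ A ∈ U, #↥A = κ) ∧
      ∃ B : Set (Set κ.ord.ToType),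
        (∀ b ∈ B, b ∈ U) ∧ (∀ A ∈ U, ∃ b ∈ B, b ⊆ A) ∧ #↥B ≤ lam) ∧
    ∃ g : κ.ord.ToType → κ.ord.ToType,
      (∀ u : Finset (κ.ord.ToType → κ.ord.ToType), ↑u ⊆ H →
        ∀ hne : u.Nonempty, ¬ AlmostLE κ g (fun β => u.sup' hne fun f => f β)) ∧
      ∃ U : Ultrafilter κ.ord.ToType,
        (∀ f ∈ H, {β : κ.ord.ToType | f β ≤ g β} ∈ U) ∧ ultraCh U ≤ lam := by
  have hκH : κ ≤ #H := hbig.le_mk hreg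
  have hκlam : κ ≤ lam := hκH.trans hHcard
  have hlam_sq : lam * lam = lam := mul_eq_self (hreg.aleph0_le.trans hκlam)
  have hlam_lt : lam < dNumber κ := hlam ▸ hrd
  have : Infinite H := infinite_iff.mpr (hreg.aleph0_le.trans hκH)
  have hFinset : #(Finset H) ≤ lam := (mk_finset_of_infinite H).trans_le hHcard
  obtain ⟨g₀, hg₀⟩ := exists_finitelyUndominated (hFinset.trans_lt hlam_lt)
  obtain ⟨h, -, hfib, hunr⟩ := hbig (finiteInterLeSets H g₀) g₀
    (fun _ => hg₀.mk_eq_of_mem_finiteInterLeSets) fun _ => setOf_le_mem_finiteInterLeSets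
  obtain ⟨U, hU, B, hBU, hB, hBκ⟩ := exists_ultrafilter_base_of_unreaped hreg hunr
    ⟨_, _, univ_mem_finiteInterLeSets, _, univ_mem_finiteInterLeSets, rfl⟩
    (directedOn_image_inter (fun _ hy _ hz => inter_mem_finiteInterLeSets hy hz) h)
    (by
      rintro _ ⟨y, hy, z, hz, rfl⟩
      exact mk_image_eq_of_mk_preimage_lt hreg hfib
        (hg₀.mk_eq_of_mem_finiteInterLeSets (inter_mem_finiteInterLeSets hy hz)))
  have hB_le : #B ≤ lam := calc
    #B ≤ #(finiteInterLeSets H g₀) * #(finiteInterLeSets H g₀) * κ :=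
      hBκ.trans (mul_le_mul_left (mk_setOf_image_inter_le h) κ)
    _ ≤ lam * lam * lam := by gcongr <;> exact mk_range_le.trans hFinset
    _ = lam := by rw [hlam_sq, hlam_sq]
  obtain ⟨g₁, hg₁⟩ := exists_forall_setOf_le_mem_of_mk_lt_dNumber (H := H) hreg hU hBU hB <|
    calc #(H × B) = #H * #B := by rw [mk_prod, lift_id, lift_id]
      _ ≤ lam * lam := mul_le_mul' hHcard hB_le
      _ < dNumber κ := hlam_sq.symm ▸ hlam_lt
  refine ⟨⟨U, fun X hX => mk_eq_of_mem_of_le_atTop hreg hU hX, B, hBU, hB, hB_le⟩,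
    g₀ ⊔ g₁, hg₀.mono le_sup_left, U, fun f hf => ?_, (ultraCh_le_mk hBU hB).trans hB_le⟩
  exact Filter.mem_of_superset (hg₁ f hf) fun β hβ => hβ.trans (le_sup_right (a := g₀ β))
end
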